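/- For every v ∈ V and every (j,i) ∈ {1,…,n}², Tip(b^v_{j,i}) = v_{j,n}(v^δ)_{1,σ(i)}, and Tip(b̃^v) = v_{n,n}(v^δ)_{1,1}. -/

import Mathlib

/-!
Common setting (from the paper "The Anick resolution of the co-unit of the free unitary
quantum group", arXiv:2403.06663):

`k` is a field and `n ≥ 2`.  `S` is the set of `2n²` generators `u∘_{j,i}, u•_{j,i}`,
`(j,i) ∈ {1,…,n}²`, with the involution `*` exchanging `u∘_{j,i}` and `u•_{j,i}`.
Indices are realized `0`-based as elements of `Fin n` (so the index `1` is `fin1 = 0`,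
the index `n` is `finN = n-1`, and `σ(i) = n-i+1` is `Fin.rev`).
-/

namespace UnPlusAnick

/-- A generator: a color (`false` = white `∘`, `true` = black `•`) and a pair of indices. -/
abbrev Gen (n : ℕ) := Bool × Fin n × Fin n

/-- The involution `*` on the generators: it flips the color and keeps the indices. -/
def genStar {n : ℕ} (g : Gen n) : Gen n := (!g.1, g.2)

/-- An `n × n` matrix with entries in the set of generators. -/
abbrev Mat (n : ℕ) := Fin n → Fin n → Gen n

/-- The fundamental matrix `u`, `u_{j,i} = u∘_{j,i}`. -/
def uMat (n : ℕ) : Mat n := fun j i => (false, j, i)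

/-- The transpose `vᵀ`. -/
def mT {n : ℕ} (v : Mat n) : Mat n := fun j i => v i j

/-- The matrix `v^σ`, `(v^σ)_{j,i} = (v_{σ(j),σ(i)})^*`. -/
def mS {n : ℕ} (v : Mat n) : Mat n := fun j i => genStar (v j.rev i.rev)

/-- The matrix `v^δ`, `(v^δ)_{j,i} = (v_{σ(i),σ(j)})^*`; thus `v^δ = (v^σ)ᵀ`. -/
def mD {n : ℕ} (v : Mat n) : Mat n := fun j i => genStar (v i.rev j.rev)

/-- The set `V = {u, uᵀ, u^σ, u^δ}`. -/
def V (n : ℕ) : Set (Mat n) := {uMat n, mT (uMat n), mS (uMat n), mD (uMat n)}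

/-- The index `1` of `{1, …, n}`, as the `0`-based element `0` of `Fin n`. -/
def fin1 (n : ℕ) (hn : 2 ≤ n) : Fin n := ⟨0, by omega⟩

/-- The index `n` of `{1, …, n}`, as the `0`-based element `n - 1` of `Fin n`. -/
def finN (n : ℕ) (hn : 2 ≤ n) : Fin n := ⟨n - 1, by omega⟩

theorem genStar_genStar {n : ℕ} (g : Gen n) : genStar (genStar g) = g := by simp [genStar]

theorem mS_mS {n : ℕ} (v : Mat n) : mS (mS v) = v := by
  funext j i; simp [mS, genStar_genStar]

theorem mD_mD {n : ℕ} (v : Mat n) : mD (mD v) = v := by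
  funext j i; simp [mD, genStar_genStar]

theorem mS_mD {n : ℕ} (v : Mat n) : mS (mD v) = mT v := by
  funext j i; simp [mS, mD, mT, genStar_genStar]

theorem mD_mS {n : ℕ} (v : Mat n) : mD (mS v) = mT v := by
  funext j i; simp [mS, mD, mT, genStar_genStar]

/-- `V` is closed under transposition. -/
theorem V_mT {n : ℕ} {v : Mat n} (hv : v ∈ V n) : mT v ∈ V n := by
  simp only [V, Set.mem_insert_iff, Set.mem_singleton_iff] at hv ⊢
  rcases hv with rfl | rfl | rfl | rfl
  · exact Or.inr (Or.inl rfl)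
  · exact Or.inl rfl
  · exact Or.inr (Or.inr (Or.inr rfl))
  · exact Or.inr (Or.inr (Or.inl rfl))

/-- `V` is closed under `v ↦ v^σ`. -/
theorem V_mS {n : ℕ} {v : Mat n} (hv : v ∈ V n) : mS v ∈ V n := by
  simp only [V, Set.mem_insert_iff, Set.mem_singleton_iff] at hv ⊢
  rcases hv with rfl | rfl | rfl | rfl
  · exact Or.inr (Or.inr (Or.inl rfl))
  · exact Or.inr (Or.inr (Or.inr rfl))
  · exact Or.inl (mS_mS _)
  · exact Or.inr (Or.inl (mS_mD _))

/-- `V` is closed under `v ↦ v^δ`. -/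
theorem V_mD {n : ℕ} {v : Mat n} (hv : v ∈ V n) : mD v ∈ V n := by
  simp only [V, Set.mem_insert_iff, Set.mem_singleton_iff] at hv ⊢
  rcases hv with rfl | rfl | rfl | rfl
  · exact Or.inr (Or.inr (Or.inr rfl))
  · exact Or.inr (Or.inr (Or.inl rfl))
  · exact Or.inr (Or.inl (mD_mS _))
  · exact Or.inl (mD_mD _)

/-! ### Words and the free algebra -/

/-- Words in the generators: the free monoid over the set of generators. -/
abbrev Word (n : ℕ) := FreeMonoid (Gen n)

/-- The free unital associative `k`-algebra on the generators, realized as the monoid algebra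
of the free monoid of words; its canonical `k`-basis is the set of words. -/
abbrev FreeAlg (k : Type*) [Field k] (n : ℕ) := MonoidAlgebra k (Word n)

/-- A word, viewed as a monomial in the free algebra. -/
noncomputable def wd (k : Type*) [Field k] {n : ℕ} (w : Word n) : FreeAlg k n :=
  MonoidAlgebra.of k (Word n) w

/-- The relation `b^v_{j,i} = ∑_{s=1}^{n} v_{j,σ(s)} (v^δ)_{s,σ(i)} − δ_{j,i} · 1`. -/
noncomputable def brel (k : Type*) [Field k] {n : ℕ} (v : Mat n) (j i : Fin n) : FreeAlg k n :=
  (∑ s : Fin n, wd k (FreeMonoid.of (v j s.rev) * FreeMonoid.of (mD v s i.rev)))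
    - if j = i then 1 else 0

/-- The set of relations `R = {b^v_{j,i} : v ∈ V, (j,i) ∈ {1,…,n}²}`. -/
def rels (k : Type*) [Field k] (n : ℕ) : Set (FreeAlg k n) :=
  {x | ∃ v ∈ V n, ∃ j i : Fin n, x = brel k v j i}

/-- `b̃^v = v_{n,n}(v^δ)_{1,1} − ∑_{s=2}^{n} ∑_{t=1}^{n−1} v_{t,σ(s)}(v^δ)_{s,σ(t)} + (n−2)·1`. -/
noncomputable def btil (k : Type*) [Field k] (n : ℕ) (hn : 2 ≤ n) (v : Mat n) : FreeAlg k n :=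
  wd k (FreeMonoid.of (v (finN n hn) (finN n hn)) * FreeMonoid.of (mD v (fin1 n hn) (fin1 n hn)))
    - (∑ s ∈ Finset.univ.filter (fun s : Fin n => s ≠ fin1 n hn),
        ∑ t ∈ Finset.univ.filter (fun t : Fin n => t ≠ finN n hn),
          wd k (FreeMonoid.of (v t s.rev) * FreeMonoid.of (mD v s t.rev)))
    + ((n - 2 : ℕ) : FreeAlg k n)

/-! ### The monomial order and tips -/

/-- The strict order on the generators: every black generator is smaller than every white one;
`u•_{t,s} < u•_{j,i}` iff `(j,i) <` `(t,s)` lexicographically, and `u∘_{t,s} < u∘_{j,i}` iff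
`(t,s) < (j,i)` lexicographically. -/
def genLT {n : ℕ} (g h : Gen n) : Prop :=
  (g.1 = true ∧ h.1 = false) ∨
    (g.1 = true ∧ h.1 = true ∧ toLex h.2 < toLex g.2) ∨
    (g.1 = false ∧ h.1 = false ∧ toLex g.2 < toLex h.2)

/-- The degreewise lexicographic extension of the order on generators to words:
`w ≤ w'` iff `w = w'`, or `w` is shorter than `w'`, or they have the same length and `w`
precedes `w'` lexicographically letter by letter. -/
def wordLE {n : ℕ} (w w' : Word n) : Prop :=
  w = w' ∨ (FreeMonoid.toList w).length < (FreeMonoid.toList w').length ∨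
    ((FreeMonoid.toList w).length = (FreeMonoid.toList w').length ∧
      List.Lex genLT (FreeMonoid.toList w) (FreeMonoid.toList w'))

/-- `IsTip f t`: the word `t` is the `≤`-largest word occurring with nonzero coefficient in
`f`, i.e. `Tip(f) = t`. -/
def IsTip (k : Type*) [Field k] {n : ℕ} (f : FreeAlg k n) (t : Word n) : Prop :=
  f.coeff t ≠ 0 ∧ ∀ w : Word n, f.coeff w ≠ 0 → wordLE w t

/-- `w` divides `w'` (as words in the free monoid). -/
def WDvd {n : ℕ} (w w' : Word n) : Prop := ∃ w₁ w₂ : Word n, w' = w₁ * w * w₂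

/-! ### The ideal of relations -/

/-- The two-sided ideal `I` of the free algebra generated by the set of relations `R`. -/
noncomputable def idl (k : Type*) [Field k] (n : ℕ) : TwoSidedIdeal (FreeAlg k n) :=
  TwoSidedIdeal.span (rels k n)

/-- The set `Tip(I)` of tips of nonzero elements of `I`. -/
def TipSet (k : Type*) [Field k] (n : ℕ) : Set (Word n) :=
  {w | ∃ f : FreeAlg k n, f ∈ idl k n ∧ f ≠ 0 ∧ IsTip k f w}

/-! ### Reductions and ambiguities -/

/-- `φ` is a one-step reduction by `f`: there are fixed words `w₁`, `w₂` such that `φ` maps the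
word `w₁ Tip(f) w₂` to `w₁ (Tip(f) − c⁻¹ f) w₂`, where `c` is the leading coefficient of `f`,
and fixes every other word. -/
def IsOneStep (k : Type*) [Field k] {n : ℕ} (f : FreeAlg k n)
    (φ : FreeAlg k n →ₗ[k] FreeAlg k n) : Prop :=
  f ≠ 0 ∧ ∃ (w₁ w₂ t : Word n), IsTip k f t ∧
    φ (wd k (w₁ * t * w₂)) = wd k w₁ * (wd k t - (f.coeff t)⁻¹ • f) * wd k w₂ ∧
    ∀ w : Word n, w ≠ w₁ * t * w₂ → φ (wd k w) = wd k w

/-- A reduction by a set `G`: a finite composition of one-step reductions by nonzero elements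
of `G`. -/
inductive IsReduction (k : Type*) [Field k] {n : ℕ} (G : Set (FreeAlg k n)) :
    (FreeAlg k n →ₗ[k] FreeAlg k n) → Prop
  | id : IsReduction k G LinearMap.id
  | comp {φ ψ : FreeAlg k n →ₗ[k] FreeAlg k n} {g : FreeAlg k n} (hg : g ∈ G)
      (hφ : IsOneStep k g φ) (hψ : IsReduction k G ψ) : IsReduction k G (φ ∘ₗ ψ)

/-- `(g, g', w₁, w₂)` is an inclusion ambiguity of `G`. -/
def IsInclusionAmbiguity (k : Type*) [Field k] {n : ℕ} (G : Set (FreeAlg k n))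
    (g g' : FreeAlg k n) (w₁ w₂ : Word n) : Prop :=
  g ∈ G ∧ g' ∈ G ∧ g ≠ 0 ∧ g' ≠ 0 ∧ g ≠ g' ∧
    ∃ t t' : Word n, IsTip k g t ∧ IsTip k g' t' ∧ w₁ * t * w₂ = t'

/-- The inclusion ambiguity `(g, g', w₁, w₂)` of `G` resolves. -/
def InclusionAmbiguityResolves (k : Type*) [Field k] {n : ℕ} (G : Set (FreeAlg k n))
    (g g' : FreeAlg k n) (w₁ w₂ : Word n) : Prop :=
  ∀ t t' : Word n, IsTip k g t → IsTip k g' t' →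
    ∃ φ₁ φ₂ : FreeAlg k n →ₗ[k] FreeAlg k n, IsReduction k G φ₁ ∧ IsReduction k G φ₂ ∧
      φ₁ (wd k t' - (g'.coeff t')⁻¹ • g') = φ₂ (wd k w₁ * (wd k t - (g.coeff t)⁻¹ • g) * wd k w₂)

/-- `(g₁, g₂, w₁, w₂)` is an overlap ambiguity of `G`. -/
def IsOverlapAmbiguity (k : Type*) [Field k] {n : ℕ} (G : Set (FreeAlg k n))
    (g₁ g₂ : FreeAlg k n) (w₁ w₂ : Word n) : Prop :=
  g₁ ∈ G ∧ g₂ ∈ G ∧ g₁ ≠ 0 ∧ g₂ ≠ 0 ∧ ¬(w₁ = 1 ∧ w₂ = 1) ∧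
    ∃ t₁ t₂ : Word n, IsTip k g₁ t₁ ∧ IsTip k g₂ t₂ ∧ t₁ * w₂ = w₁ * t₂ ∧
      ¬WDvd t₂ w₂ ∧ ¬WDvd t₁ w₁

/-- The overlap ambiguity `(g₁, g₂, w₁, w₂)` of `G` resolves. -/
def OverlapAmbiguityResolves (k : Type*) [Field k] {n : ℕ} (G : Set (FreeAlg k n))
    (g₁ g₂ : FreeAlg k n) (w₁ w₂ : Word n) : Prop :=
  ∀ t₁ t₂ : Word n, IsTip k g₁ t₁ → IsTip k g₂ t₂ →
    ∃ φ₁ φ₂ : FreeAlg k n →ₗ[k] FreeAlg k n, IsReduction k G φ₁ ∧ IsReduction k G φ₂ ∧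
      φ₁ ((wd k t₁ - (g₁.coeff t₁)⁻¹ • g₁) * wd k w₂) = φ₂ (wd k w₁ * (wd k t₂ - (g₂.coeff t₂)⁻¹ • g₂))

/-! ### Gröbner bases -/

/-- `G` is a Gröbner basis of the two-sided ideal `J` with respect to the order: `G ⊆ J` and
the tip of every nonzero element of `J` is divisible by the tip of some nonzero element
of `G`. -/
def IsGroebner (k : Type*) [Field k] {n : ℕ} (G : Set (FreeAlg k n))
    (J : TwoSidedIdeal (FreeAlg k n)) : Prop :=
  (∀ g ∈ G, g ∈ J) ∧
    ∀ f : FreeAlg k n, f ∈ J → f ≠ 0 → ∀ t : Word n, IsTip k f t →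
      ∃ g ∈ G, g ≠ 0 ∧ ∃ tg : Word n, IsTip k g tg ∧ WDvd tg t

/-- A minimal Gröbner basis: `0 ∉ G` and the tip of no element of `G` divides the tip of a
different element of `G`. -/
def IsMinimalGroebner (k : Type*) [Field k] {n : ℕ} (G : Set (FreeAlg k n))
    (J : TwoSidedIdeal (FreeAlg k n)) : Prop :=
  IsGroebner k G J ∧ (0 : FreeAlg k n) ∉ G ∧
    ∀ g ∈ G, ∀ g' ∈ G, g ≠ g' → ∀ t t' : Word n, IsTip k g t → IsTip k g' t' → ¬WDvd t t'

/-- A reduced Gröbner basis: minimal, every element has leading coefficient `1`, and the tip of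
no element of `G` divides a word occurring with nonzero coefficient in a different element
of `G`. -/
def IsReducedGroebner (k : Type*) [Field k] {n : ℕ} (G : Set (FreeAlg k n))
    (J : TwoSidedIdeal (FreeAlg k n)) : Prop :=
  IsMinimalGroebner k G J ∧ (∀ g ∈ G, ∀ t : Word n, IsTip k g t → g.coeff t = 1) ∧
    ∀ g ∈ G, ∀ g' ∈ G, g ≠ g' → ∀ t : Word n, IsTip k g t →
      ∀ w : Word n, g'.coeff w ≠ 0 → ¬WDvd t w

/-! ### Monoidal ideals -/

/-- A monoidal ideal of the free monoid of words: a set of words containing all multiples of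
its elements. -/
def IsMonIdeal {n : ℕ} (M : Set (Word n)) : Prop :=
  ∀ w ∈ M, ∀ w₁ w₂ : Word n, w₁ * w * w₂ ∈ M

/-- `N` generates `M` as a monoidal ideal: `M` is the smallest monoidal ideal containing `N`. -/
def GeneratesMonIdeal {n : ℕ} (N M : Set (Word n)) : Prop :=
  IsMonIdeal M ∧ N ⊆ M ∧ ∀ M' : Set (Word n), IsMonIdeal M' → N ⊆ M' → M ⊆ M'

/-! ### Chain words -/

/-- `v^{[ℓ]}`: equal to `v` for odd `ℓ` and to `v^δ` for even `ℓ`. -/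
def pw {n : ℕ} (l : ℕ) (v : Mat n) : Mat n := if l % 2 = 1 then v else mD v

/-- The word `v^{(ℓ)}_{j,i}` (for `ℓ ≥ 1`). -/
def chainWord (n : ℕ) (hn : 2 ≤ n) (v : Mat n) (l : ℕ) (j i : Fin n) : Word n :=
  if l = 1 then FreeMonoid.of (v j i.rev)
  else if l % 2 = 0 then
    FreeMonoid.of (v j (finN n hn)) *
      (FreeMonoid.of (mD v (fin1 n hn) (finN n hn)) *
          FreeMonoid.of (v (fin1 n hn) (finN n hn))) ^ ((l - 2) / 2) *
      FreeMonoid.of (mD v (fin1 n hn) i.rev)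
  else
    FreeMonoid.of (v j (finN n hn)) *
      (FreeMonoid.of (mD v (fin1 n hn) (finN n hn)) *
          FreeMonoid.of (v (fin1 n hn) (finN n hn))) ^ ((l - 3) / 2) *
      FreeMonoid.of (mD v (fin1 n hn) (finN n hn)) * FreeMonoid.of (v (fin1 n hn) i.rev)

/-- The set `C_ℓ = {v^{(ℓ)}_{j,i} : v ∈ V, (j,i) ∈ {1,…,n}²}` of `ℓ`-chains. -/
def Cset (n : ℕ) (hn : 2 ≤ n) (l : ℕ) : Set (Word n) :=
  {w | ∃ v ∈ V n, ∃ j i : Fin n, w = chainWord n hn v l j i}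

/-! ### The quotient algebra `A = F/I`, the counit and the modules of the resolution -/

/-- The relation identifying each element of `R` with `0`; the induced ring congruence realizes
the quotient `A = F/I` by the two-sided ideal `I` generated by `R`. -/
def relR (k : Type*) [Field k] (n : ℕ) : FreeAlg k n → FreeAlg k n → Prop :=
  fun a b => a ∈ rels k n ∧ b = 0

/-- The `k`-algebra `A = F/I`. -/
abbrev Aq (k : Type*) [Field k] (n : ℕ) := RingQuot (relR k n)

/-- The quotient map `F → A = F/I`. -/
noncomputable def pr (k : Type*) [Field k] (n : ℕ) : FreeAlg k n →ₐ[k] Aq k n :=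
  RingQuot.mkAlgHom k (relR k n)

/-- The class `v_{j,i} + I ∈ A` of a generator. -/
noncomputable def gen (k : Type*) [Field k] {n : ℕ} (v : Mat n) (j i : Fin n) : Aq k n :=
  pr k n (wd k (FreeMonoid.of (v j i)))

/-- The ring homomorphism `Aᵐᵒᵖ →+* k` induced by `ε` (using the commutativity of `k`). -/
noncomputable def epsOp (k : Type*) [Field k] (n : ℕ) (ε : Aq k n →ₐ[k] k) :
    (Aq k n)ᵐᵒᵖ →+* k where
  toFun a := ε a.unop
  map_one' := by simp
  map_mul' a b := by simp [mul_comm]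
  map_zero' := by simp
  map_add' a b := by simp

/-- The right `A`-module `k_ε`: the field `k` with the right `A`-action induced by `ε`,
realized as a left module over the opposite algebra `Aᵐᵒᵖ`. -/
def KE (k : Type*) [Field k] (n : ℕ) (_ε : Aq k n →ₐ[k] k) : Type _ := k

instance (k : Type*) [Field k] (n : ℕ) (ε : Aq k n →ₐ[k] k) : AddCommGroup (KE k n ε) :=
  inferInstanceAs (AddCommGroup k)

instance (k : Type*) [Field k] (n : ℕ) (ε : Aq k n →ₐ[k] k) : Module k (KE k n ε) :=
  inferInstanceAs (Module k k)

instance (k : Type*) [Field k] (n : ℕ) (ε : Aq k n →ₐ[k] k) : One (KE k n ε) := ⟨(1 : k)⟩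

noncomputable instance (k : Type*) [Field k] (n : ℕ) (ε : Aq k n →ₐ[k] k) :
    Module ((Aq k n)ᵐᵒᵖ) (KE k n ε) :=
  Module.compHom k (epsOp k n ε)

instance (k : Type*) [Field k] (n : ℕ) (ε : Aq k n →ₐ[k] k) :
    SMulCommClass ((Aq k n)ᵐᵒᵖ) k (KE k n ε) :=
  ⟨fun a c x => by
    show epsOp k n ε a • (c • x) = c • (epsOp k n ε a • x)
    rw [smul_smul, smul_smul, mul_comm]⟩

/-- The free right `A`-module `P_ℓ = kC_ℓ ⊗ₖ A` with basis `C_ℓ` (for `ℓ ≥ 1`), realized as a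
left module over the opposite algebra `Aᵐᵒᵖ`. -/
abbrev Pmod (k : Type*) [Field k] (n : ℕ) (hn : 2 ≤ n) (l : ℕ) :=
  ↥(Cset n hn l) →₀ Aq k n

/-- The element `v^{(ℓ)}_{j,i} ⊗ a` of `P_ℓ`. -/
noncomputable def bas (k : Type*) [Field k] (n : ℕ) (hn : 2 ≤ n) (l : ℕ) (v : Mat n)
    (hv : v ∈ V n) (j i : Fin n) (a : Aq k n) : Pmod k n hn l :=
  Finsupp.single ⟨chainWord n hn v l j i, ⟨v, hv, j, i, rfl⟩⟩ a

/-- Pre-composition with a homomorphism of right `A`-modules, as the `k`-linear map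
`Hom_A(N, k_ε) → Hom_A(M, k_ε)`, `g ↦ g ∘ d`. -/
noncomputable def homMap (k : Type*) [Field k] {n : ℕ} (ε : Aq k n →ₐ[k] k) {M N : Type*}
    [AddCommMonoid M] [AddCommMonoid N] [Module ((Aq k n)ᵐᵒᵖ) M] [Module ((Aq k n)ᵐᵒᵖ) N]
    (d : M →ₗ[(Aq k n)ᵐᵒᵖ] N) :
    (N →ₗ[(Aq k n)ᵐᵒᵖ] KE k n ε) →ₗ[k] (M →ₗ[(Aq k n)ᵐᵒᵖ] KE k n ε) where
  toFun g := g.comp d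
  map_add' _ _ := LinearMap.ext fun _ => rfl
  map_smul' _ _ := LinearMap.ext fun _ => rfl

/-- The right-hand side of the defining formula for `d₂` on the basis element
`v^{(2)}_{j,i} ⊗ 1`. -/
noncomputable def d2RHS (k : Type*) [Field k] (n : ℕ) (hn : 2 ≤ n) (v : Mat n)
    (hv : v ∈ V n) (j i : Fin n) : Pmod k n hn 1 :=
  (∑ s : Fin n, bas k n hn 1 v hv j s (gen k (mD v) s i.rev))
    + bas k n hn 1 (mD v) (V_mD hv) j.rev i 1
    - (if j = finN n hn ∧ i = finN n hn then
        ∑ s ∈ Finset.univ.filter (fun s : Fin n => s ≠ fin1 n hn),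
          ((∑ t : Fin n, bas k n hn 1 v hv t s (gen k (mD v) s t.rev))
            + bas k n hn 1 (mD v) (V_mD hv) s s.rev 1)
      else 0)

/-- The right-hand side of the defining formula for `d_ℓ`, `ℓ ≥ 3`, on the basis element
`v^{(ℓ)}_{j,i} ⊗ 1`. -/
noncomputable def dTail (k : Type*) [Field k] (n : ℕ) (hn : 2 ≤ n) (l : ℕ) (v : Mat n)
    (hv : v ∈ V n) (j i : Fin n) : Pmod k n hn (l - 1) :=
  (∑ s : Fin n, bas k n hn (l - 1) v hv j s (gen k (pw l v) s i.rev))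
    + bas k n hn (l - 1) (mD v) (V_mD hv) j.rev i ((-1 : Aq k n) ^ l)
    + (if j = finN n hn then
        ((bas k n hn (l - 1) (mT v) (V_mT hv) (fin1 n hn) (fin1 n hn)
              (gen k (pw l (mT v)) i.rev (finN n hn))
            + (if l = 3 then
                ∑ s ∈ Finset.univ.filter (fun s : Fin n => s ≠ fin1 n hn ∧ s ≠ finN n hn),
                  bas k n hn (l - 1) (mT v) (V_mT hv) s s (gen k (pw l (mT v)) i.rev (finN n hn))
              else 0))
          - (if i = finN n hn then
              (∑ s : Fin n, bas k n hn (l - 1) (mT v) (V_mT hv) (fin1 n hn) s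
                  (gen k (pw l (mT v)) s (finN n hn)))
                + bas k n hn (l - 1) (mS v) (V_mS hv) (finN n hn) (fin1 n hn) ((-1 : Aq k n) ^ l)
            else 0))
      else 0)
    + (if j = fin1 n hn ∧ i = finN n hn then
        bas k n hn (l - 1) (mS v) (V_mS hv) (fin1 n hn) (fin1 n hn) ((-1 : Aq k n) ^ l)
          + (if l = 3 then
              ∑ s ∈ Finset.univ.filter (fun s : Fin n => s ≠ fin1 n hn ∧ s ≠ finN n hn),
                bas k n hn (l - 1) (mS v) (V_mS hv) s s ((-1 : Aq k n) ^ l)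
            else 0)
      else 0)

/-- The system of identities from STATEMENT 14, for a fixed `v ∈ V`. -/
noncomputable def cond14 (k : Type*) [Field k] {n : ℕ} (hn : 2 ≤ n) (ε : Aq k n →ₐ[k] k)
    (g : Pmod k n hn 1 →ₗ[(Aq k n)ᵐᵒᵖ] KE k n ε) (v : Mat n) (hv : v ∈ V n) : Prop :=
  ∀ j i : Fin n, g (bas k n hn 1 (mS v) (V_mS hv) j i 1) = -g (bas k n hn 1 v hv i j 1)

/-- The system of identities (1)–(4) from STATEMENT 16, for a fixed `v ∈ V`. -/
noncomputable def cond16 (k : Type*) [Field k] {n : ℕ} (hn : 2 ≤ n) (ε : Aq k n →ₐ[k] k)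
    (l : ℕ) (g : Pmod k n hn (l - 1) →ₗ[(Aq k n)ᵐᵒᵖ] KE k n ε) (v : Mat n)
    (hv : v ∈ V n) : Prop :=
  (∀ j i : Fin n, (j, i) ≠ (fin1 n hn, fin1 n hn) →
      g (bas k n hn (l - 1) (mT v) (V_mT hv) j i 1) =
        -(((-1 : k) ^ l) • g (bas k n hn (l - 1) (mS v) (V_mS hv) j.rev i.rev 1))
          - (if j = finN n hn ∧ i = finN n hn then
              g (bas k n hn (l - 1) v hv (fin1 n hn) (fin1 n hn) 1)
                + (if l = 3 then
                    ∑ s ∈ Finset.univ.filter (fun s : Fin n => s ≠ fin1 n hn ∧ s ≠ finN n hn),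
                      g (bas k n hn (l - 1) v hv s s 1)
                  else 0)
            else 0)) ∧
  (∀ j i : Fin n, (j, i) ≠ (fin1 n hn, fin1 n hn) →
      g (bas k n hn (l - 1) (mD v) (V_mD hv) j i 1) =
        -(((-1 : k) ^ l) • g (bas k n hn (l - 1) v hv j.rev i.rev 1))
          - (if j = finN n hn ∧ i = finN n hn then
              g (bas k n hn (l - 1) (mS v) (V_mS hv) (fin1 n hn) (fin1 n hn) 1)
                + (if l = 3 then
                    ∑ s ∈ Finset.univ.filter (fun s : Fin n => s ≠ fin1 n hn ∧ s ≠ finN n hn),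
                      g (bas k n hn (l - 1) (mS v) (V_mS hv) s s 1)
                  else 0)
            else 0)) ∧
  (g (bas k n hn (l - 1) (mD v) (V_mD hv) (fin1 n hn) (fin1 n hn) 1) =
      -(((-1 : k) ^ l) • g (bas k n hn (l - 1) (mT v) (V_mT hv) (fin1 n hn) (fin1 n hn) 1))
        - ((-1 : k) ^ l) • g (bas k n hn (l - 1) v hv (finN n hn) (finN n hn) 1)
        + (if l = 3 then
            ∑ s ∈ Finset.univ.filter (fun s : Fin n => s ≠ fin1 n hn ∧ s ≠ finN n hn),
              g (bas k n hn (l - 1) (mS v) (V_mS hv) s s 1)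
          else 0)) ∧
  (g (bas k n hn (l - 1) (mS v) (V_mS hv) (finN n hn) (finN n hn) 1) =
      -(if l = 3 then
          ∑ s ∈ Finset.univ.filter (fun s : Fin n => s ≠ fin1 n hn ∧ s ≠ finN n hn),
            g (bas k n hn (l - 1) (mS v) (V_mS hv) s s 1)
        else 0)
        + ((-1 : k) ^ l) • (g (bas k n hn (l - 1) v hv (finN n hn) (finN n hn) 1)
            + (if l = 3 then
                ∑ s ∈ Finset.univ.filter (fun s : Fin n => s ≠ fin1 n hn ∧ s ≠ finN n hn),
                  g (bas k n hn (l - 1) v hv s s 1)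
              else 0)))

/-!
Every word of `b^v_{j,i}` other than the constant is `v_{j,σ(s)} (v^δ)_{s,σ(i)}`, and these
words are compared by their first letters alone. Each `v ∈ V` is strictly increasing in both
indices for the order on generators (a lexicographic order, reversed and starred for `u^σ` and
`u^δ`), so the largest first letter is `v_{j,n}`, reached only for `s = 1`. In `b̃^v` every
subtracted word starts with `v_{t,σ(s)}` where `t < n`, hence below `v_{n,n}`.
-/

section Tips

variable {k : Type*} [Field k] {n : ℕ}

theorem genLT_irrefl (g : Gen n) : ¬genLT g g := by
  rintro (⟨h, h'⟩ | ⟨-, -, h⟩ | ⟨-, -, h⟩)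
  · cases h.symm.trans h'
  all_goals exact lt_irrefl _ h

def wordsBelow (t : Word n) : Set (Word n) := {w | wordLE w t ∧ w ≠ t}

theorem one_mem_wordsBelow {t : Word n} (ht : t ≠ 1) : 1 ∈ wordsBelow t :=
  ⟨Or.inr (Or.inl (List.length_pos_of_ne_nil
    fun h => ht (FreeMonoid.toList.injective h))), ht.symm⟩

theorem of_mul_mem_wordsBelow {a c : Gen n} {w w' : Word n}
    (hlen : (FreeMonoid.toList w).length = (FreeMonoid.toList w').length) (h : genLT a c) :
    FreeMonoid.of a * w ∈ wordsBelow (FreeMonoid.of c * w') := by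
  refine ⟨Or.inr (Or.inr ⟨by simpa using hlen, by simpa using List.Lex.rel h⟩), fun e => ?_⟩
  have hac : a = c := by simpa using congrArg List.head? (congrArg FreeMonoid.toList e)
  exact genLT_irrefl a (hac ▸ h)

theorem isTip_wd_add {t : Word n} {g : FreeAlg k n}
    (hg : g ∈ MonoidAlgebra.supported k k (wordsBelow t)) : IsTip k (wd k t + g) t := by
  rw [MonoidAlgebra.mem_supported'] at hg
  refine ⟨by simp [wd, hg t fun h => h.2 rfl], fun w hw => ?_⟩
  by_cases hwt : w = t
  · exact Or.inl hwt
  · by_contra hle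
    exact hw (by simp [wd, Ne.symm hwt, hg w fun h => hle h.1])

theorem wd_mem_supported {w : Word n} {s : Set (Word n)} (hw : w ∈ s) :
    wd k w ∈ MonoidAlgebra.supported k k s := by
  rw [MonoidAlgebra.supported_eq_span_single]
  exact Submodule.subset_span ⟨w, hw, rfl⟩

theorem natCast_mem_supported_wordsBelow {t : Word n} (ht : t ≠ 1) (m : ℕ) :
    (m : FreeAlg k n) ∈ MonoidAlgebra.supported k k (wordsBelow t) := by
  rw [← nsmul_one, ← map_one (MonoidAlgebra.of k (Word n))]
  exact nsmul_mem (wd_mem_supported (one_mem_wordsBelow ht)) m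

end Tips

theorem genLT_apply_of_le_of_le {n : ℕ} {v : Mat n} (hv : v ∈ V n) {a b c d : Fin n}
    (hac : a ≤ c) (hbd : b ≤ d) (hne : (a, b) ≠ (c, d)) : genLT (v a b) (v c d) := by
  have hlt : (a, b) < (c, d) := lt_of_le_of_ne ⟨hac, hbd⟩ hne
  have hrev : (c.rev, d.rev) < (a.rev, b.rev) :=
    lt_of_le_of_ne ⟨Fin.rev_le_rev.2 hac, Fin.rev_le_rev.2 hbd⟩
      (by simpa [Fin.rev_inj, eq_comm] using hne)
  simp only [V, Set.mem_insert_iff, Set.mem_singleton_iff] at hv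
  rcases hv with rfl | rfl | rfl | rfl
  · exact Or.inr (Or.inr ⟨rfl, rfl, Prod.Lex.toLex_strictMono hlt⟩)
  · exact Or.inr (Or.inr ⟨rfl, rfl, Prod.Lex.toLex_strictMono (Prod.swap_lt_swap.2 hlt)⟩)
  · exact Or.inr (Or.inl ⟨rfl, rfl, Prod.Lex.toLex_strictMono hrev⟩)
  · exact Or.inr (Or.inl ⟨rfl, rfl, Prod.Lex.toLex_strictMono (Prod.swap_lt_swap.2 hrev)⟩)

theorem le_finN {n : ℕ} (hn : 2 ≤ n) (a : Fin n) : a ≤ finN n hn := by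
  have := a.isLt; simp only [Fin.le_def, finN]; omega

theorem rev_fin1 {n : ℕ} (hn : 2 ≤ n) : (fin1 n hn).rev = finN n hn := by
  ext; simp [fin1, finN]

theorem of_mul_of_ne_one {n : ℕ} (a b : Gen n) :
    FreeMonoid.of a * FreeMonoid.of b ≠ (1 : Word n) :=
  fun h => by simpa using congrArg FreeMonoid.toList h

section Relations

variable (k : Type*) [Field k] {n : ℕ} (hn : 2 ≤ n)

theorem brel_eq_wd_add (v : Mat n) (j i : Fin n) :
    brel k v j i =
      wd k (FreeMonoid.of (v j (finN n hn)) * FreeMonoid.of (mD v (fin1 n hn) i.rev)) +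
        ((∑ s ∈ Finset.univ.erase (fin1 n hn),
            wd k (FreeMonoid.of (v j s.rev) * FreeMonoid.of (mD v s i.rev)))
          - if j = i then 1 else 0) := by
  rw [brel, ← Finset.add_sum_erase _ _ (Finset.mem_univ (fin1 n hn)), rev_fin1, add_sub_assoc]

theorem btil_eq_wd_add (v : Mat n) :
    btil k n hn v =
      wd k (FreeMonoid.of (v (finN n hn) (finN n hn)) *
          FreeMonoid.of (mD v (fin1 n hn) (fin1 n hn))) +
        (((n - 2 : ℕ) : FreeAlg k n) -
          ∑ s ∈ Finset.univ.filter (fun s : Fin n => s ≠ fin1 n hn),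
            ∑ t ∈ Finset.univ.filter (fun t : Fin n => t ≠ finN n hn),
              wd k (FreeMonoid.of (v t s.rev) * FreeMonoid.of (mD v s t.rev))) := by
  rw [btil]; abel

theorem isTip_brel {v : Mat n} (hv : v ∈ V n) (j i : Fin n) :
    IsTip k (brel k v j i)
      (FreeMonoid.of (v j (finN n hn)) * FreeMonoid.of (mD v (fin1 n hn) i.rev)) := by
  have hlt : ∀ s ≠ fin1 n hn, genLT (v j s.rev) (v j (finN n hn)) := fun s hs =>
    genLT_apply_of_le_of_le hv le_rfl (le_finN hn _)
      fun h => hs (Fin.rev_injective ((Prod.ext_iff.1 h).2.trans (rev_fin1 hn).symm))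
  rw [brel_eq_wd_add k hn]
  refine isTip_wd_add (sub_mem (Submodule.sum_mem _ fun s hs => ?_) ?_)
  · exact wd_mem_supported (of_mul_mem_wordsBelow rfl (hlt s (Finset.ne_of_mem_erase hs)))
  · split_ifs
    · exact_mod_cast natCast_mem_supported_wordsBelow (of_mul_of_ne_one _ _) 1
    · exact zero_mem _

theorem isTip_btil {v : Mat n} (hv : v ∈ V n) :
    IsTip k (btil k n hn v)
      (FreeMonoid.of (v (finN n hn) (finN n hn)) *
        FreeMonoid.of (mD v (fin1 n hn) (fin1 n hn))) := by
  rw [btil_eq_wd_add k hn]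
  refine isTip_wd_add (sub_mem (natCast_mem_supported_wordsBelow (of_mul_of_ne_one _ _) _)
    (Submodule.sum_mem _ fun s _ => Submodule.sum_mem _ fun t ht => ?_))
  have hlt : genLT (v t s.rev) (v (finN n hn) (finN n hn)) :=
    genLT_apply_of_le_of_le hv (le_finN hn t) (le_finN hn _)
      fun h => (Finset.mem_filter.1 ht).2 (Prod.ext_iff.1 h).1
  exact wd_mem_supported (of_mul_mem_wordsBelow rfl hlt)

end Relations

theorem statement_1 (k : Type*) [Field k] (n : ℕ) (hn : 2 ≤ n) :
    (∀ v ∈ V n, ∀ j i : Fin n,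
        IsTip k (brel k v j i)
          (FreeMonoid.of (v j (finN n hn)) * FreeMonoid.of (mD v (fin1 n hn) i.rev))) ∧
      ∀ v ∈ V n,
        IsTip k (btil k n hn v)
          (FreeMonoid.of (v (finN n hn) (finN n hn)) *
            FreeMonoid.of (mD v (fin1 n hn) (fin1 n hn))) :=
  ⟨fun _ hv => isTip_brel k hn hv, fun _ hv => isTip_btil k hn hv⟩

end UnPlusAnick
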